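/- arXiv:1011.5053 — 3 statements merged into one kernel-verified Lean document; each statement's English description precedes it below -/
import Mathlib

section
/- Let γ > 0 and let X ⊆ ℝ^d be a set whose γ-adapted-dimension is k_γ(X), i.e. k_γ(X) is the minimal natural number k such that X is (γ²k, k)-limited. Then any finite sequence of distinct points of X that is γ-shattered by unit-norm linear separators has size at most 3·k_γ(X) + 1. -/
open scoped RealInnerProductSpace

/-- A set `X ⊆ ℝ^d` is `(b,k)`-limited: there is a subspace `V` of dimension `d - k`
whose orthogonal projection `P` satisfies `‖Px‖² ≤ b` for every `x ∈ X`. -/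
def IsLimitedSet {d : ℕ} (b : ℝ) (k : ℕ) (X : Set (EuclideanSpace ℝ (Fin d))) : Prop :=
  ∃ V : Submodule ℝ (EuclideanSpace ℝ (Fin d)), Module.finrank ℝ V = d - k ∧
    ∀ x ∈ X, ‖(V.orthogonalProjection x : EuclideanSpace ℝ (Fin d))‖ ^ 2 ≤ b

/-- A finite sequence `x₁,…,x_m` is `γ`-shattered by unit-norm linear separators. -/
def GammaShattered {d m : ℕ} (γ : ℝ) (x : Fin m → EuclideanSpace ℝ (Fin d)) : Prop :=
  ∃ r : Fin m → ℝ, ∀ y : Fin m → ℝ, (∀ i, y i = 1 ∨ y i = -1) →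
    ∃ w : EuclideanSpace ℝ (Fin d), ‖w‖ ≤ 1 ∧ ∀ i, γ ≤ y i * (⟪w, x i⟫ - r i)

/-!
Symmetrizing the thresholds, shattering gives `γ ‖c‖₁ ≤ ‖∑ cᵢ xᵢ‖` for every coefficient
vector `c`. Let `V` witness that `X` is `(γ²k, k)`-limited and let `K` be the space of `c` with
`∑ cᵢ xᵢ ∈ V`: it has dimension `N ≥ m - k`, and on it the map `A c = P_V (∑ cᵢ xᵢ)` satisfies
`γ ‖c‖₁ ≤ ‖A c‖`, while `A` has Hilbert–Schmidt norm `∑ ‖P_V xᵢ‖² ≤ m γ² k`.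
For a uniformly random sign vector `s`, the projection `P_K s` has `𝔼 ‖P_K s‖² = N` and
`‖P_K s‖² = ⟪P_K s, s⟫ ≤ ‖P_K s‖₁`, whereas `𝔼 ‖A P_K s‖² ≤ ‖A‖²_HS`; by Cauchy–Schwarz
`γ² N² ≤ m γ² k`, and `(m - k)² ≤ N² ≤ m k` forces `m ≤ 3k + 1`.
-/

open scoped InnerProduct

open Finset

def boolSign (b : Bool) : ℝ := if b then 1 else -1

theorem boolSign_mul_self (b : Bool) : boolSign b * boolSign b = 1 := by
  cases b <;> norm_num [boolSign]

theorem abs_boolSign (b : Bool) : |boolSign b| = 1 := by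
  cases b <;> norm_num [boolSign]

theorem boolSign_not (b : Bool) : boolSign (!b) = -boolSign b := by
  cases b <;> norm_num [boolSign]

section HilbertSchmidt

variable {ι κ E F : Type*} [Fintype ι] [Fintype κ]
  [NormedAddCommGroup E] [InnerProductSpace ℝ E] [FiniteDimensional ℝ E]
  [NormedAddCommGroup F] [InnerProductSpace ℝ F] [FiniteDimensional ℝ F]

theorem OrthonormalBasis.sum_norm_sq_apply_eq_sum_norm_sq_adjoint_apply
    (b : OrthonormalBasis ι ℝ E) (f : OrthonormalBasis κ ℝ F) (A : E →L[ℝ] F) :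
    ∑ j, ‖A (b j)‖ ^ 2 = ∑ c, ‖(A†) (f c)‖ ^ 2 := by
  simp_rw [← f.sum_sq_inner_right, ← b.sum_sq_inner_left, ContinuousLinearMap.adjoint_inner_left]
  exact sum_comm

theorem OrthonormalBasis.sum_norm_sq_comp_starProjection_le (b : OrthonormalBasis ι ℝ E)
    (A : E →L[ℝ] F) (K : Submodule ℝ E) :
    ∑ j, ‖A (K.starProjection (b j))‖ ^ 2 ≤ ∑ j, ‖A (b j)‖ ^ 2 := by
  let f := stdOrthonormalBasis ℝ F
  have hP : (K.starProjection)† = K.starProjection := (isSelfAdjoint_starProjection K).adjoint_eq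
  calc ∑ j, ‖(A ∘L K.starProjection) (b j)‖ ^ 2
      = ∑ c, ‖K.starProjection ((A†) (f c))‖ ^ 2 := by
        rw [b.sum_norm_sq_apply_eq_sum_norm_sq_adjoint_apply f, ContinuousLinearMap.adjoint_comp,
          hP]
        rfl
    _ ≤ ∑ c, ‖(A†) (f c)‖ ^ 2 := by
        gcongr with c
        exact K.norm_starProjection_apply_le _
    _ = ∑ j, ‖A (b j)‖ ^ 2 := (b.sum_norm_sq_apply_eq_sum_norm_sq_adjoint_apply f A).symm

theorem OrthonormalBasis.sum_norm_sq_starProjection (b : OrthonormalBasis ι ℝ E)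
    (K : Submodule ℝ E) :
    ∑ j, ‖K.starProjection (b j)‖ ^ 2 = Module.finrank ℝ K := by
  let f := stdOrthonormalBasis ℝ K
  calc ∑ j, ‖K.starProjection (b j)‖ ^ 2
      = ∑ c, ‖(K.orthogonalProjectionOnto†) (f c)‖ ^ 2 :=
        b.sum_norm_sq_apply_eq_sum_norm_sq_adjoint_apply f K.orthogonalProjectionOnto
    _ = Module.finrank ℝ K := by
        simp [K.adjoint_orthogonalProjectionOnto, Submodule.norm_coe, f.norm_eq_one]

end HilbertSchmidt

section SignVectors

variable {ι F : Type*} [Fintype ι] [NormedAddCommGroup F] [InnerProductSpace ℝ F]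

def signVec (ε : ι → Bool) : EuclideanSpace ℝ ι := WithLp.toLp 2 fun j => boolSign (ε j)

theorem inner_signVec_le (c : EuclideanSpace ℝ ι) (ε : ι → Bool) :
    ⟪c, signVec ε⟫ ≤ ∑ i, |c i| := by
  rw [PiLp.inner_apply]
  refine sum_le_sum fun i _ => ?_
  calc ⟪c i, boolSign (ε i)⟫ ≤ |boolSign (ε i) * c i| := by
        simpa using le_abs_self (boolSign (ε i) * c i)
    _ = |c i| := by rw [abs_mul, abs_boolSign, one_mul]

theorem norm_sq_starProjection_signVec_le (K : Submodule ℝ (EuclideanSpace ℝ ι))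
    (ε : ι → Bool) :
    ‖K.starProjection (signVec ε)‖ ^ 2 ≤ ∑ i, |K.starProjection (signVec ε) i| := by
  have h := K.re_inner_starProjection_eq_normSq (signVec ε)
  rw [RCLike.re_to_real, ← Submodule.norm_coe, ← K.starProjection_apply] at h
  exact h ▸ inner_signVec_le _ ε

variable [DecidableEq ι]

theorem sum_boolSign_mul_boolSign (i j : ι) :
    ∑ ε : ι → Bool, boolSign (ε i) * boolSign (ε j) = if i = j then 2 ^ Fintype.card ι else 0 := by
  split_ifs with hij
  · simp [hij, boolSign_mul_self]
  · refine sum_ninvolution (fun ε => Function.update ε i !(ε i)) (fun ε => ?_)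
      (fun ε _ h => ?_) (fun _ => mem_univ _) (fun ε => ?_)
    · simp [Function.update_of_ne (Ne.symm hij), boolSign_not]
    · simpa using congrFun h i
    · simp

theorem sum_norm_sq_sum_boolSign_smul (w : ι → F) :
    ∑ ε : ι → Bool, ‖∑ j, boolSign (ε j) • w j‖ ^ 2 = 2 ^ Fintype.card ι * ∑ j, ‖w j‖ ^ 2 := by
  have expand (ε : ι → Bool) : ‖∑ j, boolSign (ε j) • w j‖ ^ 2
      = ∑ i, ∑ j, boolSign (ε i) * boolSign (ε j) * ⟪w i, w j⟫ := by
    simp_rw [← real_inner_self_eq_norm_sq, sum_inner, inner_sum, real_inner_smul_left,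
      real_inner_smul_right, mul_assoc]
  simp_rw [expand, sum_comm (γ := ι → Bool), ← sum_mul, sum_boolSign_mul_boolSign, ite_mul,
    zero_mul, sum_ite_eq, mem_univ, if_true, real_inner_self_eq_norm_sq, mul_sum]

theorem signVec_eq_sum (ε : ι → Bool) :
    signVec ε = ∑ j, boolSign (ε j) • EuclideanSpace.basisFun ι ℝ j := by
  ext i
  simp [signVec, Pi.single_apply]

theorem sum_norm_sq_apply_signVec (G : EuclideanSpace ℝ ι →L[ℝ] F) :
    ∑ ε : ι → Bool, ‖G (signVec ε)‖ ^ 2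
      = 2 ^ Fintype.card ι * ∑ j, ‖G (EuclideanSpace.basisFun ι ℝ j)‖ ^ 2 := by
  simp_rw [signVec_eq_sum, map_sum, map_smul]
  exact sum_norm_sq_sum_boolSign_smul _

theorem sq_mul_finrank_le_sum_norm_sq [FiniteDimensional ℝ F] {γ : ℝ} (hγ : 0 ≤ γ)
    (K : Submodule ℝ (EuclideanSpace ℝ ι)) (A : EuclideanSpace ℝ ι →L[ℝ] F)
    (hA : ∀ c ∈ K, γ * ∑ i, |c i| ≤ ‖A c‖) :
    (γ * Module.finrank ℝ K) ^ 2 ≤ ∑ j, ‖A (EuclideanSpace.basisFun ι ℝ j)‖ ^ 2 := by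
  set P := K.starProjection
  set e := EuclideanSpace.basisFun ι ℝ
  set C : ℝ := 2 ^ Fintype.card ι
  have hC : 0 < C := by positivity
  have h_trace : ∑ ε : ι → Bool, ‖P (signVec ε)‖ ^ 2 = C * Module.finrank ℝ K := by
    rw [sum_norm_sq_apply_signVec, e.sum_norm_sq_starProjection]
  have h_hs : ∑ ε : ι → Bool, ‖A (P (signVec ε))‖ ^ 2 ≤ C * ∑ j, ‖A (e j)‖ ^ 2 := by
    calc _ = C * ∑ j, ‖A (P (e j))‖ ^ 2 := sum_norm_sq_apply_signVec (A ∘L P)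
      _ ≤ _ := mul_le_mul_of_nonneg_left (e.sum_norm_sq_comp_starProjection_le A K) hC.le
  have h_pt (ε : ι → Bool) : γ * ‖P (signVec ε)‖ ^ 2 ≤ ‖A (P (signVec ε))‖ :=
    (mul_le_mul_of_nonneg_left (norm_sq_starProjection_signVec_le K ε) hγ).trans
      (hA _ (K.starProjection_apply_mem _))
  have h_lower : γ * (C * Module.finrank ℝ K) ≤ ∑ ε : ι → Bool, ‖A (P (signVec ε))‖ := by
    rw [← h_trace, mul_sum]
    exact sum_le_sum fun ε _ => h_pt ε
  have h_cs : (∑ ε : ι → Bool, ‖A (P (signVec ε))‖) ^ 2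
      ≤ C * ∑ ε : ι → Bool, ‖A (P (signVec ε))‖ ^ 2 := by
    simpa [C] using sq_sum_le_card_mul_sum_sq (s := univ) (f := fun ε => ‖A (P (signVec ε))‖)
  refine le_of_mul_le_mul_left ?_ (pow_pos hC 2)
  calc C ^ 2 * (γ * Module.finrank ℝ K) ^ 2 = (γ * (C * Module.finrank ℝ K)) ^ 2 := by ring
    _ ≤ (∑ ε : ι → Bool, ‖A (P (signVec ε))‖) ^ 2 :=
      pow_le_pow_left₀ (by positivity) h_lower 2
    _ ≤ C * (C * ∑ j, ‖A (e j)‖ ^ 2) := h_cs.trans (mul_le_mul_of_nonneg_left h_hs hC.le)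
    _ = C ^ 2 * ∑ j, ‖A (e j)‖ ^ 2 := by ring

end SignVectors

section Shattering

variable {d m : ℕ} {γ : ℝ} {x : Fin m → EuclideanSpace ℝ (Fin d)}

theorem GammaShattered.exists_forall_le_mul_inner (h : GammaShattered γ x) (y : Fin m → ℝ)
    (hy : ∀ i, y i = 1 ∨ y i = -1) :
    ∃ w : EuclideanSpace ℝ (Fin d), ‖w‖ ≤ 1 ∧ ∀ i, γ ≤ y i * ⟪w, x i⟫ := by
  obtain ⟨r, hr⟩ := h
  obtain ⟨w₁, hw₁, h₁⟩ := hr y hy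
  obtain ⟨w₂, hw₂, h₂⟩ := hr (-y) fun i => by rcases hy i with h | h <;> simp [h]
  refine ⟨(1 / 2 : ℝ) • (w₁ - w₂), ?_, fun i => ?_⟩
  · calc ‖(1 / 2 : ℝ) • (w₁ - w₂)‖ ≤ 1 / 2 * (‖w₁‖ + ‖w₂‖) := by
          rw [norm_smul, Real.norm_of_nonneg (by norm_num)]
          gcongr
          exact norm_sub_le _ _
      _ ≤ 1 := by linarith
  · have := h₂ i
    simp only [Pi.neg_apply] at this
    rw [real_inner_smul_left, inner_sub_left]
    linarith [h₁ i]

theorem GammaShattered.mul_sum_abs_le_norm_sum_smul (h : GammaShattered γ x) (c : Fin m → ℝ) :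
    γ * ∑ i, |c i| ≤ ‖∑ i, c i • x i‖ := by
  obtain ⟨w, hw, hwx⟩ := h.exists_forall_le_mul_inner (fun i => if 0 ≤ c i then 1 else -1)
    fun i => by split_ifs <;> simp
  have h_term (i : Fin m) : γ * |c i| ≤ c i * ⟪w, x i⟫ := by
    have := hwx i
    split_ifs at this with hc
    · rw [abs_of_nonneg hc]; nlinarith
    · rw [abs_of_neg (not_le.mp hc)]; nlinarith
  calc γ * ∑ i, |c i| ≤ ∑ i, c i * ⟪w, x i⟫ := by
        rw [mul_sum]; exact sum_le_sum fun i _ => h_term i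
    _ = ⟪w, ∑ i, c i • x i⟫ := by simp_rw [inner_sum, real_inner_smul_right]
    _ ≤ ‖w‖ * ‖∑ i, c i • x i‖ := real_inner_le_norm _ _
    _ ≤ ‖∑ i, c i • x i‖ := mul_le_of_le_one_left (norm_nonneg _) hw

end Shattering

theorem Submodule.finrank_add_finrank_le_finrank_comap_add {K M E : Type*} [DivisionRing K]
    [AddCommGroup M] [Module K M] [FiniteDimensional K M]
    [AddCommGroup E] [Module K E] [FiniteDimensional K E] (f : M →ₗ[K] E) (V : Submodule K E) :
    Module.finrank K M + Module.finrank K V ≤ Module.finrank K (V.comap f) + Module.finrank K E := by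
  have h_rank := (V.mkQ ∘ₗ f).finrank_range_add_finrank_ker
  rw [LinearMap.ker_comp, Submodule.ker_mkQ] at h_rank
  have h_range := Submodule.finrank_le (LinearMap.range (V.mkQ ∘ₗ f))
  have h_quot := V.finrank_quotient_add_finrank
  omega

theorem isLimitedSet_of_nonneg {d : ℕ} {b : ℝ} (hb : 0 ≤ b) (X : Set (EuclideanSpace ℝ (Fin d))) :
    IsLimitedSet b d X :=
  ⟨⊥, by simp, fun x _ => by simpa using hb⟩

theorem GammaShattered.card_le_of_isLimitedSet {d m k : ℕ} {γ : ℝ} (hγ : 0 < γ)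
    {X : Set (EuclideanSpace ℝ (Fin d))} (hX : IsLimitedSet (γ ^ 2 * k) k X)
    {x : Fin m → EuclideanSpace ℝ (Fin d)} (hmem : ∀ i, x i ∈ X) (h : GammaShattered γ x) :
    m ≤ 3 * k + 1 := by
  obtain ⟨V, hV, hVX⟩ := hX
  let S : EuclideanSpace ℝ (Fin m) →L[ℝ] EuclideanSpace ℝ (Fin d) :=
    ∑ i, (EuclideanSpace.proj i).smulRight (x i)
  have hS (c : EuclideanSpace ℝ (Fin m)) : S c = ∑ i, c i • x i := by simp [S]
  let K := V.comap (S : EuclideanSpace ℝ (Fin m) →ₗ[ℝ] EuclideanSpace ℝ (Fin d))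
  have hK : ∀ c ∈ K, γ * ∑ i, |c i| ≤ ‖(V.starProjection ∘L S) c‖ := fun c hc => by
    have hc' : S c ∈ V := hc
    rw [ContinuousLinearMap.comp_apply, V.starProjection_eq_self_iff.mpr hc', hS]
    exact h.mul_sum_abs_le_norm_sum_smul c
  have h_hs : ∑ j, ‖(V.starProjection ∘L S) (EuclideanSpace.basisFun (Fin m) ℝ j)‖ ^ 2
      ≤ m * (γ ^ 2 * k) := by
    calc _ = ∑ j, ‖V.starProjection (x j)‖ ^ 2 := by simp [hS]
      _ ≤ ∑ _j : Fin m, γ ^ 2 * k := sum_le_sum fun j _ => hVX _ (hmem j)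
      _ = m * (γ ^ 2 * k) := by simp
  have h_sq_real : ((Module.finrank ℝ K) ^ 2 : ℝ) ≤ m * k := by
    refine le_of_mul_le_mul_left ?_ (pow_pos hγ 2)
    calc γ ^ 2 * Module.finrank ℝ K ^ 2 = (γ * Module.finrank ℝ K) ^ 2 := by ring
      _ ≤ m * (γ ^ 2 * k) := (sq_mul_finrank_le_sum_norm_sq hγ.le K _ hK).trans h_hs
      _ = γ ^ 2 * (m * k) := by ring
  have h_dim : m + (d - k) ≤ Module.finrank ℝ K + d := by
    have := Submodule.finrank_add_finrank_le_finrank_comap_add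
      (S : EuclideanSpace ℝ (Fin m) →ₗ[ℝ] EuclideanSpace ℝ (Fin d)) V
    rwa [finrank_euclideanSpace_fin, finrank_euclideanSpace_fin, hV] at this
  have h_sq : Module.finrank ℝ K ^ 2 ≤ m * k := by exact_mod_cast h_sq_real
  have h_mk : m ≤ Module.finrank ℝ K + k := by omega
  nlinarith

theorem fat_shattering_le_adapted_dimension_general
    (d m : ℕ) (γ : ℝ) (hγ : 0 < γ)
    (X : Set (EuclideanSpace ℝ (Fin d)))
    (kγ : ℕ)
    (hkγ : kγ = sInf {k : ℕ | IsLimitedSet (γ ^ 2 * k) k X})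
    (x : Fin m → EuclideanSpace ℝ (Fin d))
    (hmem : ∀ i, x i ∈ X)
    (hshat : GammaShattered γ x) :
    m ≤ 3 * kγ + 1 := by
  have hkγ_mem : IsLimitedSet (γ ^ 2 * kγ) kγ X := by
    rw [hkγ]
    exact Nat.sInf_mem (s := {k : ℕ | IsLimitedSet (γ ^ 2 * k) k X})
      ⟨d, isLimitedSet_of_nonneg (by positivity) X⟩
  exact hshat.card_le_of_isLimitedSet hγ hkγ_mem hmem

/-- If `k_γ(X)` is the γ-adapted-dimension of a set `X ⊆ ℝ^d`,
i.e. the minimal `k` with `X` being `(γ²k, k)`-limited, then any finite sequence of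
distinct points of `X` that is `γ`-shattered by unit-norm linear separators has size
at most `3 k_γ(X) + 1`. -/
theorem fat_shattering_le_adapted_dimension
    (d m : ℕ) (γ : ℝ) (hγ : 0 < γ)
    (X : Set (EuclideanSpace ℝ (Fin d)))
    (kγ : ℕ)
    (hkγ : kγ = sInf {k : ℕ | IsLimitedSet (γ ^ 2 * k) k X})
    (hex : ∃ k : ℕ, IsLimitedSet (γ ^ 2 * k) k X)
    (x : Fin m → EuclideanSpace ℝ (Fin d))
    (hinj : Function.Injective x) (hmem : ∀ i, x i ∈ X)
    (hshat : GammaShattered γ x) :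
    m ≤ 3 * kγ + 1 :=
  fat_shattering_le_adapted_dimension_general d m γ hγ X kγ hkγ x hmem hshat
end

section
/- Let m be a positive integer and let (r_y)_{y ∈ {±1}^m} be a family of vectors in ℝ^m such that for every y ∈ {±1}^m and every i ∈ [m], r_y[i]·y[i] ≥ 1. Then every sign vector y ∈ {±1}^m lies in the convex hull of the set {r_y : y ∈ {±1}^m}. -/
/-!
Suppose a sign vector `y` is not in the (closed, since finitely generated) convex hull of the
`r y'`. Separate it by a linear functional `x ↦ ∑ i, x i * c i`, and let `y'` be the sign vector
of `c`. Coordinatewise `y i * c i ≤ |c i| ≤ r y' i * c i`, because `r y' i` has the sign of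
`c i` and modulus at least `1`; so the functional is at least as large at the hull point `r y'`
as at `y`, a contradiction.
-/

open Finset

theorem mem_convexHull_of_forall_exists_le {E : Type*} [AddCommGroup E] [Module ℝ E]
    [TopologicalSpace E] [IsTopologicalAddGroup E] [ContinuousSMul ℝ E]
    [LocallyConvexSpace ℝ E] {S : Set E} (hS : IsClosed (convexHull ℝ S)) {x : E}
    (h : ∀ f : StrongDual ℝ E, ∃ s ∈ S, f x ≤ f s) : x ∈ convexHull ℝ S := by
  by_contra hx
  obtain ⟨f, u, hfS, hfx⟩ := geometric_hahn_banach_closed_point (convex_convexHull ℝ S) hS hx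
  obtain ⟨s, hs, hxs⟩ := h f
  linarith [hfS s (subset_convexHull ℝ S hs)]

def signVectors (ι : Type*) : Set (ι → ℝ) := {y | ∀ i, y i = 1 ∨ y i = -1}

theorem signVectors_finite (ι : Type*) [Finite ι] : (signVectors ι).Finite :=
  (Set.Finite.pi fun _ => Set.toFinite ({1, -1} : Set ℝ)).subset fun _ hy i _ => hy i

/-- The sign of `0` is taken to be `1`. -/
noncomputable def signVector {ι : Type*} (c : ι → ℝ) : ι → ℝ :=
  fun i => if 0 ≤ c i then 1 else -1

theorem signVector_mem_signVectors {ι : Type*} (c : ι → ℝ) : signVector c ∈ signVectors ι :=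
  fun i => by unfold signVector; split_ifs <;> simp

theorem mul_le_mul_of_one_le_mul_signVector {ι : Type*} {c y z : ι → ℝ} (i : ι)
    (hy : y ∈ signVectors ι) (hz : 1 ≤ z i * signVector c i) : y i * c i ≤ z i * c i := by
  have hyc : y i * c i ≤ |c i| := by
    rcases hy i with h | h <;> simp [h, le_abs_self, neg_le_abs]
  unfold signVector at hz
  split_ifs at hz with hc
  · rw [abs_of_nonneg hc] at hyc; nlinarith
  · rw [abs_of_neg (not_le.mp hc)] at hyc; nlinarith

theorem sum_mul_le_sum_mul_of_one_le_mul_signVector {ι : Type*} [Fintype ι] {c y z : ι → ℝ}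
    (hy : y ∈ signVectors ι) (hz : ∀ i, 1 ≤ z i * signVector c i) :
    ∑ i, y i * c i ≤ ∑ i, z i * c i :=
  sum_le_sum fun i _ => mul_le_mul_of_one_le_mul_signVector i hy (hz i)

theorem sign_vectors_mem_convexHull_general
    (m : ℕ)
    (r : (Fin m → ℝ) → (Fin m → ℝ))
    (hr : ∀ y : Fin m → ℝ, (∀ i, y i = 1 ∨ y i = -1) → ∀ i, r y i * y i ≥ 1) :
    ∀ y : Fin m → ℝ, (∀ i, y i = 1 ∨ y i = -1) →
      y ∈ convexHull ℝ (r '' {y' : Fin m → ℝ | ∀ i, y' i = 1 ∨ y' i = -1}) := by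
  intro y hy
  have hclosed : IsClosed (convexHull ℝ (r '' signVectors (Fin m))) :=
    ((signVectors_finite (Fin m)).image r).isClosed_convexHull (𝕜 := ℝ)
  refine mem_convexHull_of_forall_exists_le hclosed fun f => ?_
  set c : Fin m → ℝ := fun i => f fun j => if i = j then 1 else 0
  have hsign := signVector_mem_signVectors c
  refine ⟨r (signVector c), Set.mem_image_of_mem r hsign, ?_⟩
  rw [← f.coe_coe, LinearMap.pi_apply_eq_sum_univ, LinearMap.pi_apply_eq_sum_univ]
  exact sum_mul_le_sum_mul_of_one_le_mul_signVector hy (hr _ hsign)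

/-- If for every sign vector `y ∈ {±1}^m` we have a vector `r y`
with `(r y)ᵢ · yᵢ ≥ 1` for all `i`, then every sign vector lies in the convex hull
of the family `{r y : y ∈ {±1}^m}`. -/
theorem sign_vectors_mem_convexHull
    (m : ℕ) (hm : 0 < m)
    (r : (Fin m → ℝ) → (Fin m → ℝ))
    (hr : ∀ y : Fin m → ℝ, (∀ i, y i = 1 ∨ y i = -1) → ∀ i, r y i * y i ≥ 1) :
    ∀ y : Fin m → ℝ, (∀ i, y i = 1 ∨ y i = -1) →
      y ∈ convexHull ℝ (r '' {y' : Fin m → ℝ | ∀ i, y' i = 1 ∨ y' i = -1}) :=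
  sign_vectors_mem_convexHull_general m r hr
end

section
/- Let B > 0. There exist constants α > 0 and η ∈ (0,1), depending only on B, such that for all positive integers m ≤ d, for every d×m random matrix Y whose entries Y_{ij} are independent, centered, of variance 1 and fourth moment E[Y_{ij}⁴] ≤ B, for every d×d diagonal positive semidefinite matrix Σ with Σ ≤ I_d, and for every unit vector x ∈ ℝ^m: P[‖√Σ · Y x‖₂² ≤ α·(trace(Σ) − 1)] ≤ η^{trace(Σ)}. -/
/-!
Each row `Zᵢ = ∑ⱼ Yᵢⱼ xⱼ` is a sum of independent centred variables, so `𝔼 Zᵢ² = ∑ⱼ xⱼ² = 1`,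
and expanding the fourth power gives `𝔼 Zᵢ⁴ ≤ ∑ⱼ xⱼ⁴ 𝔼 Yᵢⱼ⁴ + 3 ≤ B + 3`. From
`e^{-u} ≤ 1 - u + u²` (`u ≥ 0`) these two moments give `𝔼 exp(-t λᵢ Zᵢ²) ≤ exp(-t λᵢ / 2)` for
`t = 1 / (2 (B + 3))`. The rows are independent, so the lower-tail Chernoff bound gives
`P[∑ λᵢ Zᵢ² ≤ (tr Σ - 1) / 4] ≤ exp(t (tr Σ - 1) / 4 - t tr Σ / 2) ≤ exp(-t / 4) ^ tr Σ`.
-/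

open MeasureTheory ProbabilityTheory

namespace ProbabilityTheory

variable {Ω : Type*} [MeasurableSpace Ω] {μ : Measure Ω}

section Curry

variable {ι κ 𝓧 : Type*} [MeasurableSpace 𝓧] {X : ι → κ → Ω → 𝓧}

lemma iIndepFun.row (h : iIndepFun (fun p : ι × κ => X p.1 p.2) μ) (i : ι) :
    iIndepFun (X i) μ :=
  h.precomp (g := fun j => (i, j)) fun _ _ hj => (Prod.mk.inj hj).2

lemma iIndepFun.curry (mX : ∀ i j, Measurable (X i j))
    (h : iIndepFun (fun p : ι × κ => X p.1 p.2) μ) :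
    iIndepFun (fun i ω j => X i j ω) μ := by
  have := h.isProbabilityMeasure
  have (i : ι) (j : κ) : IsProbabilityMeasure (μ.map (X i j)) :=
    Measure.isProbabilityMeasure_map (mX i j).aemeasurable
  rw [iIndepFun_iff_map_fun_eq_infinitePi_map fun i => measurable_pi_lambda _ (mX i)]
  have hcurry : (fun ω i j => X i j ω) = MeasurableEquiv.curry ι κ 𝓧 ∘ fun ω p => X p.1 p.2 ω :=
    rfl
  rw [hcurry, ← Measure.map_map (MeasurableEquiv.measurable _) (by fun_prop),
    h.map_fun_eq_infinitePi_map (X := fun p : ι × κ => X p.1 p.2) fun p => mX p.1 p.2,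
    Measure.infinitePi_map_curry fun i j => μ.map (X i j)]
  congr 1
  ext1 i
  exact ((h.row i).map_fun_eq_infinitePi_map (mX i)).symm

end Curry

lemma _root_.MeasureTheory.MemLp.integrable_pow_of_le [IsFiniteMeasure μ] {f : Ω → ℝ} {p k : ℕ}
    (hf : MemLp f p μ) (hk : k ≤ p) : Integrable (fun ω => f ω ^ k) μ := by
  have hk' : MemLp f k μ := hf.mono_exponent (by exact_mod_cast hk)
  refine (integrable_norm_iff (hf.1.pow k)).1 ?_
  simpa only [Pi.pow_apply, norm_pow] using hk'.integrable_norm_pow'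

section Moments

variable [IsProbabilityMeasure μ] {X Y : Ω → ℝ}

lemma IndepFun.integral_add_pow_four (h : IndepFun X Y μ) (hX : MemLp X 4 μ) (hY : MemLp Y 4 μ)
    (hX0 : ∫ ω, X ω ∂μ = 0) (hY0 : ∫ ω, Y ω ∂μ = 0) :
    ∫ ω, (X ω + Y ω) ^ 4 ∂μ =
      ∫ ω, X ω ^ 4 ∂μ + 6 * ((∫ ω, X ω ^ 2 ∂μ) * ∫ ω, Y ω ^ 2 ∂μ) + ∫ ω, Y ω ^ 4 ∂μ := by
  have hpow {a b : ℕ} (ha : a ≤ 4) (hb : b ≤ 4) :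
      Integrable (fun ω => X ω ^ a * Y ω ^ b) μ ∧
        ∫ ω, X ω ^ a * Y ω ^ b ∂μ = (∫ ω, X ω ^ a ∂μ) * ∫ ω, Y ω ^ b ∂μ := by
    have hXa := hX.integrable_pow_of_le (p := 4) ha
    have hYb := hY.integrable_pow_of_le (p := 4) hb
    have hab := h.comp (measurable_id.pow_const a) (measurable_id.pow_const b)
    exact ⟨hab.integrable_mul hXa hYb, hab.integral_mul_eq_mul_integral hXa.1 hYb.1⟩
  obtain ⟨i40, -⟩ := hpow (a := 4) (b := 0) le_rfl (by norm_num)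
  obtain ⟨i31, e31⟩ := hpow (a := 3) (b := 1) (by norm_num) (by norm_num)
  obtain ⟨i22, e22⟩ := hpow (a := 2) (b := 2) (by norm_num) (by norm_num)
  obtain ⟨i13, e13⟩ := hpow (a := 1) (b := 3) (by norm_num) (by norm_num)
  obtain ⟨i04, -⟩ := hpow (a := 0) (b := 4) (by norm_num) le_rfl
  have hexpand : (fun ω => (X ω + Y ω) ^ 4) = fun ω =>
      X ω ^ 4 * Y ω ^ 0 + 4 * (X ω ^ 3 * Y ω ^ 1) + 6 * (X ω ^ 2 * Y ω ^ 2)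
        + 4 * (X ω ^ 1 * Y ω ^ 3) + X ω ^ 0 * Y ω ^ 4 := by
    ext ω; ring
  rw [hexpand, integral_add (by fun_prop) i04, integral_add (by fun_prop) (i13.const_mul 4),
    integral_add (by fun_prop) (i22.const_mul 6), integral_add i40 (i31.const_mul 4),
    integral_const_mul, integral_const_mul, integral_const_mul, e31, e22, e13]
  simp [hX0, hY0]

variable {ι : Type*} {W : ι → Ω → ℝ}

lemma iIndepFun.integral_sum_sq (hW : iIndepFun W μ) (s : Finset ι) (hW2 : ∀ j, MemLp (W j) 2 μ)
    (hW0 : ∀ j, ∫ ω, W j ω ∂μ = 0) :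
    ∫ ω, (∑ j ∈ s, W j ω) ^ 2 ∂μ = ∑ j ∈ s, ∫ ω, W j ω ^ 2 ∂μ := by
  have hsum : (∑ j ∈ s, W j) = fun ω => ∑ j ∈ s, W j ω := by ext ω; simp
  have hpair : Set.Pairwise s fun i j => IndepFun (W i) (W j) μ :=
    fun i _ j _ hij => hW.indepFun hij
  rw [← variance_of_integral_eq_zero, ← hsum, IndepFun.variance_sum (fun j _ => hW2 j) hpair]
  · exact Finset.sum_congr rfl fun j _ => variance_of_integral_eq_zero (hW2 j).aemeasurable (hW0 j)
  · exact Finset.aemeasurable_fun_sum s fun j _ => (hW2 j).aemeasurable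
  · simp [integral_finsetSum s fun j _ => (hW2 j).integrable one_le_two, hW0]

lemma iIndepFun.integral_sum_pow_four_le (hW : iIndepFun W μ)
    (hmeas : ∀ j, Measurable (W j)) (s : Finset ι) (hW4 : ∀ j, MemLp (W j) 4 μ)
    (hW0 : ∀ j, ∫ ω, W j ω ∂μ = 0) :
    ∫ ω, (∑ j ∈ s, W j ω) ^ 4 ∂μ ≤
      ∑ j ∈ s, ∫ ω, W j ω ^ 4 ∂μ + 3 * (∑ j ∈ s, ∫ ω, W j ω ^ 2 ∂μ) ^ 2 := by
  classical
  have hW2 (j : ι) : MemLp (W j) 2 μ := (hW4 j).mono_exponent (by norm_num)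
  induction s using Finset.induction_on with
  | empty => simp
  | @insert a s ha ih =>
    have hindep : IndepFun (fun ω => ∑ j ∈ s, W j ω) (W a) μ := by
      simpa only [← Finset.sum_apply] using hW.indepFun_finsetSum_of_notMem hmeas ha
    have hS4 : MemLp (fun ω => ∑ j ∈ s, W j ω) 4 μ := memLp_finsetSum s fun j _ => hW4 j
    have hS0 : ∫ ω, ∑ j ∈ s, W j ω ∂μ = 0 := by
      simp [integral_finsetSum s fun j _ => (hW4 j).integrable (by norm_num), hW0]
    have hσa : 0 ≤ ∫ ω, W a ω ^ 2 ∂μ := integral_nonneg fun ω => sq_nonneg _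
    have hσs : 0 ≤ ∑ j ∈ s, ∫ ω, W j ω ^ 2 ∂μ :=
      Finset.sum_nonneg fun j _ => integral_nonneg fun ω => sq_nonneg _
    simp only [Finset.sum_insert ha, add_comm (W a _)]
    rw [hindep.integral_add_pow_four hS4 (hW4 a) hS0 (hW0 a), hW.integral_sum_sq s hW2 hW0]
    nlinarith

lemma iIndepFun.integral_weighted_sum_sq [Fintype ι] (hW : iIndepFun W μ)
    (hW4 : ∀ j, MemLp (W j) 4 μ) (hW0 : ∀ j, ∫ ω, W j ω ∂μ = 0)
    (hW2 : ∀ j, ∫ ω, W j ω ^ 2 ∂μ = 1) {x : ι → ℝ} (hx : ∑ j, x j ^ 2 = 1) :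
    ∫ ω, (∑ j, W j ω * x j) ^ 2 ∂μ = 1 := by
  have hV : iIndepFun (fun j ω => W j ω * x j) μ :=
    hW.comp (fun j y => y * x j) fun j => measurable_id.mul_const _
  rw [hV.integral_sum_sq Finset.univ (fun j => ((hW4 j).mono_exponent (by norm_num)).mul_const _)
    (fun j => by rw [integral_mul_const, hW0, zero_mul]), ← hx]
  simp_rw [mul_pow, integral_mul_const, hW2, one_mul]

lemma iIndepFun.integral_weighted_sum_pow_four_le [Fintype ι] (hW : iIndepFun W μ)
    (hmeas : ∀ j, Measurable (W j)) (hW4 : ∀ j, MemLp (W j) 4 μ) (hW0 : ∀ j, ∫ ω, W j ω ∂μ = 0)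
    (hW2 : ∀ j, ∫ ω, W j ω ^ 2 ∂μ = 1) {B : ℝ} (hB : 0 ≤ B) (hWB : ∀ j, ∫ ω, W j ω ^ 4 ∂μ ≤ B)
    {x : ι → ℝ} (hx : ∑ j, x j ^ 2 = 1) :
    ∫ ω, (∑ j, W j ω * x j) ^ 4 ∂μ ≤ B + 3 := by
  have hV : iIndepFun (fun j ω => W j ω * x j) μ :=
    hW.comp (fun j y => y * x j) fun j => measurable_id.mul_const _
  refine (hV.integral_sum_pow_four_le (fun j => (hmeas j).mul_const _) Finset.univ
    (fun j => (hW4 j).mul_const _) fun j => by rw [integral_mul_const, hW0, zero_mul]).trans ?_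
  simp_rw [mul_pow, integral_mul_const, hW2, one_mul, hx, one_pow, mul_one]
  have hx4 : ∑ j, x j ^ 4 ≤ 1 := by
    simpa [← pow_mul, hx] using Finset.sum_sq_le_sq_sum_of_nonneg (s := Finset.univ)
      (f := fun j => x j ^ 2) fun j _ => sq_nonneg _
  calc ∑ j, (∫ ω, W j ω ^ 4 ∂μ) * x j ^ 4 + 3 ≤ ∑ j, B * x j ^ 4 + 3 := by
        gcongr with j; exact hWB j
    _ ≤ B + 3 := by
        rw [← Finset.mul_sum]; gcongr; exact mul_le_of_le_one_right hB hx4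

end Moments

lemma _root_.Real.exp_neg_le_one_sub_add_sq {u : ℝ} (hu : 0 ≤ u) :
    Real.exp (-u) ≤ 1 - u + u ^ 2 := by
  have h := Real.add_one_le_exp u
  have hinv : Real.exp (-u) * Real.exp u = 1 := by simp [← Real.exp_add]
  -- `(1 - u + u²)(1 + u) = 1 + u³ ≥ 1`
  nlinarith [Real.exp_pos (-u), Real.exp_pos u, pow_nonneg hu 3]

lemma mgf_neg_mul_sq_le [IsProbabilityMeasure μ] {Z : Ω → ℝ} (hZ : MemLp Z 4 μ)
    (hZ2 : ∫ ω, Z ω ^ 2 ∂μ = 1) {K : ℝ} (hZ4 : ∫ ω, Z ω ^ 4 ∂μ ≤ K) {t c : ℝ} (ht : 0 ≤ t)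
    (htK : t * K ≤ 1 / 2) (hc0 : 0 ≤ c) (hc1 : c ≤ 1) :
    mgf (fun ω => c * Z ω ^ 2) μ (-t) ≤ Real.exp (-(t * c / 2)) := by
  have i2 := hZ.integrable_pow_of_le (p := 4) (k := 2) (by norm_num)
  have i4 := hZ.integrable_pow_of_le (p := 4) (k := 4) le_rfl
  have hexp : Integrable (fun ω => Real.exp (-t * (c * Z ω ^ 2))) μ := by
    refine (integrable_const (1 : ℝ)).mono'
      (Real.continuous_exp.comp_aestronglyMeasurable ((hZ.1.pow 2).const_mul c |>.const_mul (-t)))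
      (ae_of_all _ fun ω => ?_)
    rw [Real.norm_of_nonneg (Real.exp_pos _).le, Real.exp_le_one_iff]
    nlinarith [mul_nonneg hc0 (sq_nonneg (Z ω))]
  calc mgf (fun ω => c * Z ω ^ 2) μ (-t)
      ≤ ∫ ω, 1 - t * c * Z ω ^ 2 + t ^ 2 * c ^ 2 * Z ω ^ 4 ∂μ := by
        refine integral_mono hexp (by fun_prop) fun ω => ?_
        have := Real.exp_neg_le_one_sub_add_sq (mul_nonneg ht (mul_nonneg hc0 (sq_nonneg (Z ω))))
        rw [neg_mul]
        exact this.trans_eq (by ring)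
    _ = 1 - t * c + t ^ 2 * c ^ 2 * ∫ ω, Z ω ^ 4 ∂μ := by
        rw [integral_add (by fun_prop) (i4.const_mul _),
          integral_sub (by fun_prop) (i2.const_mul _),
          integral_const_mul, integral_const_mul, hZ2]
        simp
    _ ≤ 1 - t * c + t * c * c * (t * K) := by
        have : t ^ 2 * c ^ 2 * ∫ ω, Z ω ^ 4 ∂μ ≤ t ^ 2 * c ^ 2 * K := by gcongr
        linarith
    _ ≤ 1 + -(t * c / 2) := by
        have htc : 0 ≤ t * c := mul_nonneg ht hc0
        have h1 := mul_le_mul_of_nonneg_left htK (mul_nonneg htc hc0)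
        have h2 := mul_le_of_le_one_right htc hc1
        linarith
    _ ≤ Real.exp (-(t * c / 2)) := by
        rw [add_comm]; exact Real.add_one_le_exp _

lemma iIndepFun.measureReal_sum_le_le {ι : Type*} [Fintype ι] {X : ι → Ω → ℝ}
    (hX : iIndepFun X μ) (hmeas : ∀ i, Measurable (X i)) (hX0 : ∀ i ω, 0 ≤ X i ω) {t : ℝ}
    (ht : 0 ≤ t) (ε : ℝ) :
    μ.real {ω | ∑ i, X i ω ≤ ε} ≤ Real.exp (t * ε) * ∏ i, mgf (X i) μ (-t) := by
  have := hX.isProbabilityMeasure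
  have hint (i : ι) : Integrable (fun ω => Real.exp (-t * X i ω)) μ := by
    refine (integrable_const (1 : ℝ)).mono' ((hmeas i).const_mul _).exp.aestronglyMeasurable
      (ae_of_all _ fun ω => ?_)
    rw [Real.norm_of_nonneg (Real.exp_pos _).le, Real.exp_le_one_iff]
    nlinarith [hX0 i ω]
  have h := measure_le_le_exp_mul_mgf ε (neg_nonpos.2 ht)
    (hX.integrable_exp_mul_sum hmeas (s := Finset.univ) fun i _ => hint i)
  simpa only [hX.mgf_sum hmeas, neg_neg, Finset.sum_apply] using h

end ProbabilityTheory

/-- For every `B > 0` there are `α > 0` and `η ∈ (0,1)` depending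
only on `B` such that for all `m ≤ d`, every `d × m` random matrix `Y` with
independent centered unit-variance entries with fourth moment at most `B`, every
diagonal PSD `Σ = diag(λ) ≤ I`, and every unit vector `x ∈ ℝ^m`:
`P[‖√Σ Y x‖² ≤ α (trace Σ − 1)] ≤ η^{trace Σ}`. -/
theorem small_ball_exponential_bound (B : ℝ) (hB : 0 < B) :
    ∃ α : ℝ, 0 < α ∧ ∃ η : ℝ, η ∈ Set.Ioo (0 : ℝ) 1 ∧
    ∀ (d m : ℕ), 0 < m → m ≤ d →
    ∀ (Ω : Type) (mΩ : MeasurableSpace Ω) (μ : Measure Ω), IsProbabilityMeasure μ →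
    ∀ Y : Fin d → Fin m → Ω → ℝ,
    (∀ i j, Measurable (Y i j)) →
    iIndepFun (fun p : Fin d × Fin m => Y p.1 p.2) μ →
    (∀ i j, MemLp (Y i j) 4 μ) →
    (∀ i j, ∫ ω, Y i j ω ∂μ = 0) →
    (∀ i j, ∫ ω, (Y i j ω) ^ 2 ∂μ = 1) →
    (∀ i j, ∫ ω, (Y i j ω) ^ 4 ∂μ ≤ B) →
    ∀ lam : Fin d → ℝ, (∀ i, lam i ∈ Set.Icc (0 : ℝ) 1) →
    ∀ x : Fin m → ℝ, ∑ j, (x j) ^ 2 = 1 →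
      μ {ω : Ω | ∑ i, lam i * (∑ j, Y i j ω * x j) ^ 2 ≤ α * ((∑ i, lam i) - 1)} ≤
        ENNReal.ofReal (η ^ (∑ i, lam i)) := by
  obtain ⟨t, ht, htB⟩ : ∃ t : ℝ, 0 < t ∧ t * (B + 3) ≤ 1 / 2 :=
    ⟨1 / (2 * (B + 3)), by positivity, le_of_eq (by field_simp)⟩
  refine ⟨1 / 4, by norm_num, Real.exp (-(t / 4)), ⟨Real.exp_pos _, by simpa using ht⟩, ?_⟩
  intro d m _ _ Ω _ μ _ Y hmeas hindep hL4 hmean hvar h4 lam hlam x hx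
  have hmgf (i : Fin d) :
      mgf (fun ω => lam i * (∑ j, Y i j ω * x j) ^ 2) μ (-t) ≤ Real.exp (-(t * lam i / 2)) :=
    mgf_neg_mul_sq_le (memLp_finsetSum _ fun j _ => (hL4 i j).mul_const _)
      ((hindep.row i).integral_weighted_sum_sq (hL4 i) (hmean i) (hvar i) hx)
      ((hindep.row i).integral_weighted_sum_pow_four_le (hmeas i) (hL4 i) (hmean i) (hvar i)
        hB.le (h4 i) hx) ht.le htB (hlam i).1 (hlam i).2
  have hrows : iIndepFun (fun i ω => lam i * (∑ j, Y i j ω * x j) ^ 2) μ :=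
    (hindep.curry hmeas).comp (fun i v => lam i * (∑ j, v j * x j) ^ 2) fun i => by fun_prop
  have hchernoff := hrows.measureReal_sum_le_le (fun i => by fun_prop)
    (fun i ω => mul_nonneg (hlam i).1 (sq_nonneg _)) ht.le (1 / 4 * ((∑ i, lam i) - 1))
  have hprod : ∏ i, mgf (fun ω => lam i * (∑ j, Y i j ω * x j) ^ 2) μ (-t)
      ≤ Real.exp (-(t / 2) * ∑ i, lam i) := by
    rw [Finset.mul_sum, Real.exp_sum]
    exact Finset.prod_le_prod (fun i _ => mgf_nonneg) fun i _ => (hmgf i).trans_eq (by ring_nf)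
  rw [← ofReal_measureReal, ← Real.exp_mul]
  refine ENNReal.ofReal_le_ofReal (hchernoff.trans ?_)
  grw [hprod, ← Real.exp_add]
  gcongr
  linarith
end
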